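/- arXiv:2507.13885 — 7 statements merged into one kernel-verified Lean document; each statement's English description precedes it below -/
import Mathlib

section
/- Let A be a string of length n over Σ∪{?} and B a string of length m with n/2 < m ≤ n, and let k be the total number of wildcard entries in A and B. Suppose that for every shift d with 1 ≤ d < k, the shifted matching sum of B with shift d is at least 3k. Then for all indices α, β with 0 ≤ α < β ≤ n−m and β−α < k, either the number of mismatches between A[α, α+m−1] and B is at least k/2, or the number of mismatches between A[β, β+m−1] and B is at least k/2. -/
/-- Two entries of a string over `Σ ∪ {?}` (wildcard modeled as `none`) match:
they are equal or at least one of them is the wildcard. -/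
def wmatch {σ : Type*} (x y : Option σ) : Prop := x = none ∨ y = none ∨ x = y

instance {σ : Type*} [DecidableEq σ] (x y : Option σ) : Decidable (wmatch x y) := by
  unfold wmatch; infer_instance

/-- Entry `i` of the shifted matching array `S(B,d)`: it is `1` if `B i = ?` or
`B (i+d) = ?` or `B i ≠ B (i+d)`, and `0` otherwise. -/
def S {σ : Type*} [DecidableEq σ] (B : ℕ → Option σ) (d i : ℕ) : ℕ :=
  if B i = none ∨ B (i + d) = none ∨ B i ≠ B (i + d) then 1 else 0

/-- The shifted matching sum of a string of length `m` with shift `d`: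
`Σ_{i=0}^{m-d-1} S(B,d)_i`. -/
def Ssum {σ : Type*} [DecidableEq σ] (B : ℕ → Option σ) (m d : ℕ) : ℕ :=
  ∑ i ∈ Finset.range (m - d), S B d i

/-- Number of mismatches between the window `A[s, s+m-1]` and `B[0, m-1]`. -/
def mismatches {σ : Type*} [DecidableEq σ] (A B : ℕ → Option σ) (s m : ℕ) : ℕ :=
  ((Finset.range m).filter (fun j => ¬ wmatch (A (s + j)) (B j))).card

/-- Number of wildcard entries among the first `len` entries of `X`. -/
def wcount {σ : Type*} [DecidableEq σ] (X : ℕ → Option σ) (len : ℕ) : ℕ :=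
  ((Finset.range len).filter (fun i => X i = none)).card

lemma key_lemma {σ : Type*} [DecidableEq σ] (a b c : Option σ) :
    (if b = none ∨ c = none ∨ b ≠ c then 1 else 0) ≤
      (if ¬ wmatch a b then 1 else 0) + ((if ¬ wmatch a c then 1 else 0)
      + ((if a = none then 1 else 0) + ((if b = none then 1 else 0)
      + (if c = none then 1 else 0)))) := by
  unfold wmatch
  split_ifs <;> simp_all

/-- If every shift `1 ≤ d < k` has shifted matching sum of `B` at least `3k`, then for
`α < β ≤ n - m` with `β - α < k`, one of the two alignment windows has at least `k/2`
mismatches with `B`. -/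
theorem stmt0 {σ : Type*} [DecidableEq σ] (A B : ℕ → Option σ) (n m k : ℕ)
    (hmn : m ≤ n) (hnm : n < 2 * m)
    (hk : k = wcount A n + wcount B m)
    (hshift : ∀ d, 1 ≤ d → d < k → 3 * k ≤ Ssum B m d) :
    ∀ α β, α < β → β ≤ n - m → β - α < k →
      k ≤ 2 * mismatches A B α m ∨ k ≤ 2 * mismatches A B β m := by
  intro α β hαβ hβn hba
  set d := β - α with hd
  have hβα : β = α + d := by omega
  have hss := hshift d (by omega) hba
  have key : ∀ i ∈ Finset.range (m - d), S B d i ≤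
      (if ¬ wmatch (A (β + i)) (B i) then 1 else 0)
    + ((if ¬ wmatch (A (α + (i + d))) (B (i + d)) then 1 else 0)
    + ((if A (β + i) = none then 1 else 0)
    + ((if B i = none then 1 else 0)
    + (if B (i + d) = none then 1 else 0)))) := by
    intro i _
    have hβi : α + (i + d) = β + i := by omega
    rw [hβi]
    simpa [S] using key_lemma (A (β + i)) (B i) (B (i + d))
  have hsum : Ssum B m d ≤
      mismatches A B β m + (mismatches A B α m + (wcount A n + (wcount B m + wcount B m))) := by
    refine le_trans (Finset.sum_le_sum key) ?_
    rw [Finset.sum_add_distrib, Finset.sum_add_distrib, Finset.sum_add_distrib,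
       Finset.sum_add_distrib]
    gcongr
    · rw [← Finset.card_filter]
      exact Finset.card_le_card (Finset.monotone_filter_left _
        (Finset.range_subset_range.2 (by omega)))
    · rw [← Finset.card_filter]
      apply Finset.card_le_card_of_injOn (fun i => i + d)
      · intro i hi
        simp only [Finset.mem_coe, Finset.mem_filter, Finset.mem_range] at hi ⊢
        exact ⟨by omega, hi.2⟩
      · intro a _ b _ h; simp only [] at h; omega
    · rw [← Finset.card_filter]
      apply Finset.card_le_card_of_injOn (fun i => β + i)
      · intro i hi
        simp only [Finset.mem_coe, Finset.mem_filter, Finset.mem_range] at hi ⊢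
        exact ⟨by omega, hi.2⟩
      · intro a _ b _ h; simp only [] at h; omega
    · rw [← Finset.card_filter]
      exact Finset.card_le_card (Finset.monotone_filter_left _
        (Finset.range_subset_range.2 (by omega)))
    · rw [← Finset.card_filter]
      apply Finset.card_le_card_of_injOn (fun i => i + d)
      · intro i hi
        simp only [Finset.mem_coe, Finset.mem_filter, Finset.mem_range] at hi ⊢
        exact ⟨by omega, hi.2⟩
      · intro a _ b _ h; simp only [] at h; omega
  omega
end

section
/- Let A be a string of length n over Σ∪{?} and B a string of length m ≤ n, and let k be the total number of wildcard entries in A and B. Let α, β be indices with 0 ≤ α < β ≤ n−m, set d = β−α, and suppose 1 ≤ d < m. Then the shifted matching sum of B with shift d is at most 2k plus the number of mismatches between A[α, α+m−1] and B plus the number of mismatches between A[β, β+m−1] and B. -/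
/-- The counting bound from the proof of Lemma 1: for `d = β - α`, the shifted matching
sum of `B` with shift `d` is at most `2k` plus the mismatch counts of the two windows. -/
theorem stmt2 {σ : Type*} [DecidableEq σ] (A B : ℕ → Option σ) (n m k : ℕ)
    (hmn : m ≤ n)
    (hk : k = wcount A n + wcount B m)
    (α β d : ℕ) (hαβ : α < β) (hβ : β ≤ n - m)
    (hd : d = β - α) (hd1 : 1 ≤ d) (hdm : d < m) :
    Ssum B m d ≤ 2 * k + mismatches A B α m + mismatches A B β m := by
  have hβm : β + m ≤ n := by omega
  have key : ∀ i ∈ Finset.range (m - d), S B d i ≤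
      ((((if B i = none then 1 else 0) + (if B (i+d) = none then 1 else 0))
      + (if A (β+i) = none then 1 else 0))
      + (if ¬ wmatch (A (α + (i+d))) (B (i+d)) then 1 else 0))
      + (if ¬ wmatch (A (β + i)) (B i) then 1 else 0) := by
    intro i _
    have hab : α + (i + d) = β + i := by omega
    rw [hab]
    clear hd hβ hαβ hk hmn hd1 hdm hβm hab
    unfold S wmatch
    split_ifs <;> first | omega | tauto | simp_all
  calc Ssum B m d ≤ _ := Finset.sum_le_sum key
    _ = _ := by rw [Finset.sum_add_distrib, Finset.sum_add_distrib,
        Finset.sum_add_distrib, Finset.sum_add_distrib]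
    _ ≤ 2 * k + mismatches A B α m + mismatches A B β m := by
      rw [← Finset.card_filter, ← Finset.card_filter, ← Finset.card_filter,
        ← Finset.card_filter, ← Finset.card_filter]
      have h1 : ((Finset.range (m-d)).filter (fun i => B i = none)).card ≤ wcount B m :=
        Finset.card_le_card (Finset.filter_subset_filter _
          (Finset.range_subset_range.2 (by omega)))
      have h2 : ((Finset.range (m-d)).filter (fun i => B (i+d) = none)).card ≤ wcount B m := by
        apply Finset.card_le_card_of_injOn (fun i => i + d)
        · intro i hi
          simp only [Finset.mem_coe, Finset.mem_filter, Finset.mem_range] at hi ⊢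
          exact ⟨by omega, hi.2⟩
        · intro a _ b _ h; simpa using h
      have h3 : ((Finset.range (m-d)).filter (fun i => A (β+i) = none)).card ≤ wcount A n := by
        apply Finset.card_le_card_of_injOn (fun i => β + i)
        · intro i hi
          simp only [Finset.mem_coe, Finset.mem_filter, Finset.mem_range] at hi ⊢
          exact ⟨by omega, hi.2⟩
        · intro a _ b _ h; simpa using h
      have h4 : ((Finset.range (m-d)).filter
          (fun i => ¬ wmatch (A (α + (i+d))) (B (i+d)))).card ≤ mismatches A B α m := by
        apply Finset.card_le_card_of_injOn (fun i => i + d)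
        · intro i hi
          simp only [Finset.mem_coe, Finset.mem_filter, Finset.mem_range] at hi ⊢
          exact ⟨by omega, hi.2⟩
        · intro a _ b _ h; simpa using h
      have h5 : ((Finset.range (m-d)).filter
          (fun i => ¬ wmatch (A (β + i)) (B i))).card ≤ mismatches A B β m :=
        Finset.card_le_card (Finset.filter_subset_filter _
          (Finset.range_subset_range.2 (by omega)))
      omega
end

section
/- Let A be a string of length n over Σ∪{?} and B a string of length m ≤ n, let k be the total number of wildcard entries in A and B, and let d be a shift with 1 ≤ d < m such that the shifted matching sum of B with shift d is at most 6k. If for some index i with 0 ≤ i ≤ n−m the string A[i, i+m−1] matches B, then Σ_{j=i}^{i+m−d−1} S(A,d)_j ≤ 8k. -/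
/-- Lemma 2 of the paper: if the shifted matching sum of `B` with shift `d` is at most
`6k` and `A[i, i+m-1]` matches `B`, then `Σ_{j=i}^{i+m-d-1} S(A,d)_j ≤ 8k`. -/
theorem stmt3 {σ : Type*} [DecidableEq σ] (A B : ℕ → Option σ) (n m k : ℕ)
    (hmn : m ≤ n)
    (hk : k = wcount A n + wcount B m)
    (d : ℕ) (hd1 : 1 ≤ d) (hdm : d < m)
    (hB : Ssum B m d ≤ 6 * k)
    (i : ℕ) (hi : i ≤ n - m)
    (hmatch : ∀ j < m, wmatch (A (i + j)) (B j)) :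
    (∑ j ∈ Finset.range (m - d), S A d (i + j)) ≤ 8 * k := by
  have hwA : wcount A n ≤ k := by omega
  have key : ∀ c, c ≤ d → (∑ j ∈ Finset.range (m - d),
      if A (i + j + c) = none then 1 else 0) ≤ k := by
    intro c hc
    rw [← Finset.card_filter]
    refine le_trans ?_ hwA
    unfold wcount
    apply Finset.card_le_card_of_injOn (fun j => i + j + c)
    · intro j hj
      simp only [Finset.mem_coe, Finset.mem_filter, Finset.mem_range] at hj ⊢
      obtain ⟨h1, h2⟩ := hj
      exact ⟨by omega, h2⟩
    · intro a _ b _ h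
      simp only at h
      omega
  have hiw : ∀ j ∈ Finset.range (m - d),
      S A d (i + j) ≤ S B d j
        + (if A (i + j + 0) = none then 1 else 0)
        + (if A (i + j + d) = none then 1 else 0) := by
    intro j hj
    rw [Finset.mem_range] at hj
    have hjm : j < m := lt_of_lt_of_le hj (Nat.sub_le m d)
    have hjdm : j + d < m := by omega
    have h1 := hmatch j hjm
    have h2 := hmatch (j + d) hjdm
    simp only [Nat.add_zero]
    unfold S
    by_cases hA1 : A (i + j) = none
    · split_ifs <;> first | omega | tauto
    by_cases hA2 : A (i + j + d) = none
    · split_ifs <;> first | omega | tauto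
    by_cases hS : B j = none ∨ B (j + d) = none ∨ B j ≠ B (j + d)
    · rw [if_pos hS]; split <;> omega
    · push_neg at hS
      obtain ⟨hB1, hB2, hB3⟩ := hS
      have e1 : A (i + j) = B j := by
        rcases h1 with h | h | h
        · exact absurd h hA1
        · exact absurd h hB1
        · exact h
      have e2 : A (i + j + d) = B (j + d) := by
        have heq : i + (j + d) = i + j + d := by ring
        rw [heq] at h2
        rcases h2 with h | h | h
        · exact absurd h hA2
        · exact absurd h hB2
        · exact h
      have hno : ¬ (A (i + j) = none ∨ A (i + j + d) = none ∨ A (i + j) ≠ A (i + j + d)) := by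
        push_neg
        exact ⟨hA1, hA2, by rw [e1, e2, hB3]⟩
      rw [if_neg hno]
      exact Nat.zero_le _
  calc ∑ j ∈ Finset.range (m - d), S A d (i + j)
      ≤ ∑ j ∈ Finset.range (m - d), (S B d j
        + (if A (i + j + 0) = none then 1 else 0)
        + (if A (i + j + d) = none then 1 else 0)) := Finset.sum_le_sum hiw
    _ = Ssum B m d
        + (∑ j ∈ Finset.range (m - d), if A (i + j + 0) = none then 1 else 0)
        + (∑ j ∈ Finset.range (m - d), if A (i + j + d) = none then 1 else 0) := by
        rw [Finset.sum_add_distrib, Finset.sum_add_distrib]; rfl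
    _ ≤ 6 * k + k + k := by
        have h0 := key 0 (Nat.zero_le d)
        have hd := key d le_rfl
        omega
    _ = 8 * k := by ring
end

section
/- Let A be a string of length n over Σ∪{?} and B a string of length m ≤ n, let k be the total number of wildcard entries in A and B, and let d be a shift with 1 ≤ d < m. If for some index i with 0 ≤ i ≤ n−m the string A[i, i+m−1] matches B, then Σ_{j=i}^{i+m−d−1} S(A,d)_j is at most 2k plus the shifted matching sum of B with shift d. -/
lemma ind_sum_le {σ : Type*} [DecidableEq σ] (A : ℕ → Option σ) (n c l : ℕ)
    (h : c + l ≤ n) :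
    (∑ j ∈ Finset.range l, if A (c + j) = none then 1 else 0) ≤ wcount A n := by
  rw [Finset.sum_boole]
  push_cast
  apply Finset.card_le_card_of_injOn (fun j => c + j)
  · intro j hj
    simp only [Finset.coe_filter, Finset.mem_coe, Set.mem_setOf_eq, Finset.mem_filter, Finset.mem_range] at *
    exact ⟨by omega, hj.2⟩
  · intro a _ b _ hab
    simpa using hab

/-- The counting bound from the proof of Lemma 2: if `A[i, i+m-1]` matches `B`, then
`Σ_{j=i}^{i+m-d-1} S(A,d)_j` is at most `2k` plus the shifted matching sum of `B`
with shift `d`. -/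
theorem stmt4 {σ : Type*} [DecidableEq σ] (A B : ℕ → Option σ) (n m k : ℕ)
    (hmn : m ≤ n)
    (hk : k = wcount A n + wcount B m)
    (d : ℕ) (hd1 : 1 ≤ d) (hdm : d < m)
    (i : ℕ) (hi : i ≤ n - m)
    (hmatch : ∀ j < m, wmatch (A (i + j)) (B j)) :
    (∑ j ∈ Finset.range (m - d), S A d (i + j)) ≤ 2 * k + Ssum B m d := by
  have key : ∀ j ∈ Finset.range (m - d),
      S A d (i + j) ≤ (S B d j
        + (if A (i + j) = none then 1 else 0))
        + (if A (i + j + d) = none then 1 else 0) := by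
    intro j hj
    simp only [Finset.mem_range] at hj
    have h1 := hmatch j (by omega)
    have h2 := hmatch (j + d) (by omega)
    unfold wmatch at h1 h2
    have hid : i + j + d = i + (j + d) := by omega
    have hSle : S A d (i + j) ≤ 1 := by unfold S; split_ifs <;> omega
    by_cases hA1 : A (i + j) = none
    · rw [if_pos hA1]; omega
    by_cases hA2 : A (i + j + d) = none
    · rw [if_pos hA2]; omega
    by_cases hB1 : B j = none
    · have hb : S B d j = 1 := by unfold S; rw [if_pos (Or.inl hB1)]
      omega
    by_cases hB2 : B (j + d) = none
    · have hb : S B d j = 1 := by unfold S; rw [if_pos (Or.inr (Or.inl hB2))]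
      omega
    rw [hid] at hA2
    have e1 : A (i + j) = B j := by tauto
    have e2 : A (i + (j + d)) = B (j + d) := by tauto
    have he : S A d (i + j) = S B d j := by
      unfold S; rw [show i + j + d = i + (j + d) from hid, e1, e2]
    rw [he]
    exact (Nat.le_add_right _ _).trans (Nat.le_add_right _ _)
  calc (∑ j ∈ Finset.range (m - d), S A d (i + j))
      ≤ ∑ j ∈ Finset.range (m - d), ((S B d j
        + (if A (i + j) = none then 1 else 0))
        + (if A (i + j + d) = none then 1 else 0)) := Finset.sum_le_sum key
    _ = Ssum B m d + (∑ j ∈ Finset.range (m - d), if A (i + j) = none then 1 else 0)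
        + (∑ j ∈ Finset.range (m - d), if A (i + j + d) = none then 1 else 0) := by
        rw [Finset.sum_add_distrib, Finset.sum_add_distrib]; rfl
    _ ≤ Ssum B m d + wcount A n + wcount A n := by
        have h1 := ind_sum_le A n i (m - d) (by omega)
        have h2 : (∑ j ∈ Finset.range (m - d), if A (i + j + d) = none then 1 else 0)
            ≤ wcount A n := by
          have h3 := ind_sum_le A n (i + d) (m - d) (by omega)
          calc (∑ j ∈ Finset.range (m - d), if A (i + j + d) = none then 1 else 0)
              = ∑ j ∈ Finset.range (m - d), if A (i + d + j) = none then 1 else 0 := by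
                apply Finset.sum_congr rfl; intro j _
                have : i + j + d = i + d + j := by omega
                rw [this]
            _ ≤ wcount A n := h3
        omega
    _ ≤ 2 * k + Ssum B m d := by omega
end

section
/- Let A be a string of length n over Σ∪{?} and B a string of length m ≤ n, let d be a shift with 1 ≤ d < m, and let i be an index with 0 ≤ i ≤ n−m. Then A[i, i+m−1] matches B if and only if all three of the following hold: (1) for each j with 0 ≤ j < d, A_{i+j} matches B_j; (2) for each j with 0 ≤ j < m−d such that S(A,d)_{i+j} = 1, A_{i+j} matches B_j and A_{i+j+d} matches B_{j+d}; (3) for each j with 0 ≤ j < m−d such that S(B,d)_j = 1, A_{i+j} matches B_j and A_{i+j+d} matches B_{j+d}. -/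
/-- Lemma 3 of the paper: `A[i, i+m-1]` matches `B` iff the matching condition holds
at the first `d` offsets, at all offsets where `S(A,d)` is `1`, and at all offsets
where `S(B,d)` is `1`. -/
theorem stmt6 {σ : Type*} [DecidableEq σ] (A B : ℕ → Option σ) (n m : ℕ)
    (hmn : m ≤ n)
    (d : ℕ) (hd1 : 1 ≤ d) (hdm : d < m)
    (i : ℕ) (hi : i ≤ n - m) :
    (∀ j < m, wmatch (A (i + j)) (B j)) ↔
      ((∀ j < d, wmatch (A (i + j)) (B j)) ∧
       (∀ j < m - d, S A d (i + j) = 1 →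
          wmatch (A (i + j)) (B j) ∧ wmatch (A (i + j + d)) (B (j + d))) ∧
       (∀ j < m - d, S B d j = 1 →
          wmatch (A (i + j)) (B j) ∧ wmatch (A (i + j + d)) (B (j + d)))) := by
  constructor
  · intro h
    refine ⟨fun j hj => h j (hj.trans hdm), ?_, ?_⟩ <;>
      refine fun j hj _ => ⟨h j (lt_of_lt_of_le hj (Nat.sub_le m d)), ?_⟩ <;>
      · have := h (j + d) (by omega)
        rwa [← Nat.add_assoc] at this
  · rintro ⟨h1, h2, h3⟩ j hj
    induction j using Nat.strong_induction_on with
    | _ j ih =>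
      by_cases hjd : j < d
      · exact h1 j hjd
      · have hj' : j - d < m - d := by omega
        have hjeq : j - d + d = j := by omega
        have hidx : i + (j - d) + d = i + j := by omega
        by_cases hSA : S A d (i + (j - d)) = 1
        · have := (h2 (j - d) hj' hSA).2
          rwa [hjeq, hidx] at this
        by_cases hSB : S B d (j - d) = 1
        · have := (h3 (j - d) hj' hSB).2
          rwa [hjeq, hidx] at this
        have hm := ih (j - d) (by omega) (by omega)
        have hA' : ¬(A (i+(j-d)) = none ∨ A (i+(j-d)+d) = none ∨ A (i+(j-d)) ≠ A (i+(j-d)+d)) :=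
          fun h' => hSA (by simp [S, h'])
        have hB' : ¬(B (j-d) = none ∨ B (j-d+d) = none ∨ B (j-d) ≠ B (j-d+d)) :=
          fun h' => hSB (by simp [S, h'])
        push_neg at hA' hB'
        have heq : A (i + (j - d)) = B (j - d) := by
          rcases hm with h'|h'|h'
          · exact absurd h' hA'.1
          · exact absurd h' hB'.1
          · exact h'
        refine Or.inr (Or.inr ?_)
        rw [← hidx, ← hA'.2.2, heq, hB'.2.2, hjeq]
end

section
/- Let A be a string of length n over Σ∪{?} and B a string of length m ≤ n, let d be a shift with 1 ≤ d < m, and let i be an index with 0 ≤ i ≤ n−m. Let j be an index with d ≤ j < m such that A_{i+j−d} matches B_{j−d} but A_{i+j} does not match B_j. Then S(A,d)_{i+j−d} = 1 or S(B,d)_{j−d} = 1. -/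
/-- The key step in the proof of Lemma 3: if `A_{i+j-d}` matches `B_{j-d}` but
`A_{i+j}` does not match `B_j` (for `d ≤ j < m`), then `S(A,d)_{i+j-d} = 1` or
`S(B,d)_{j-d} = 1`. -/
theorem stmt7 {σ : Type*} [DecidableEq σ] (A B : ℕ → Option σ) (n m : ℕ)
    (hmn : m ≤ n)
    (d : ℕ) (hd1 : 1 ≤ d) (hdm : d < m)
    (i : ℕ) (hi : i ≤ n - m)
    (j : ℕ) (hdj : d ≤ j) (hjm : j < m)
    (h1 : wmatch (A (i + (j - d))) (B (j - d)))
    (h2 : ¬ wmatch (A (i + j)) (B j)) :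
    S A d (i + (j - d)) = 1 ∨ S B d (j - d) = 1 := by
  have hA : i + (j - d) + d = i + j := by omega
  have hB : j - d + d = j := by omega
  unfold wmatch at h1 h2
  push_neg at h2
  obtain ⟨ha, hb, hne⟩ := h2
  unfold S
  rw [hA, hB]
  rcases h1 with h | h | h
  · left; simp [h]
  · right; simp [h]
  · by_cases hAA : A (i + (j - d)) = A (i + j)
    · right
      have : B (j - d) ≠ B j := by
        intro hBB; exact hne (by rw [← hAA, h, hBB])
      simp [this]
    · left; simp [hAA]
end

section
/- Let A be a string of length n over Σ∪{?} and B a string of length m with n/2 < m ≤ n, let k be the total number of wildcard entries in A and B, and let d be a shift with 1 ≤ d < m such that the shifted matching sum of B with shift d is at most 6k. Suppose there exist 8k+1 indices i_0 < i_1 < ... < i_{8k} with m−1 ≤ i_0 and i_{8k} ≤ n−d−1 such that S(A,d)_{i_t} = 1 for all 0 ≤ t ≤ 8k. Then for every index s with 0 ≤ s ≤ n−m and s+m−d−1 ≥ i_{8k}, the string A[s, s+m−1] does not match B. -/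
/-- Localization step of Case 2: if there are `8k+1` indices `idx 0 < ⋯ < idx (8k)`
in `[m-1, n-d-1]` where `S(A,d)` equals `1`, then no window `A[s, s+m-1]` whose range
of shifted-array indices reaches `idx (8k)` can match `B`. -/
theorem stmt8 {σ : Type*} [DecidableEq σ] (A B : ℕ → Option σ) (n m k : ℕ)
    (hmn : m ≤ n) (hnm : n < 2 * m)
    (hk : k = wcount A n + wcount B m)
    (d : ℕ) (hd1 : 1 ≤ d) (hdm : d < m)
    (hB : Ssum B m d ≤ 6 * k)
    (idx : ℕ → ℕ)
    (hmono : ∀ t < 8 * k, idx t < idx (t + 1))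
    (h0 : m - 1 ≤ idx 0) (hlast : idx (8 * k) ≤ n - d - 1)
    (hones : ∀ t ≤ 8 * k, S A d (idx t) = 1) :
    ∀ s, s ≤ n - m → idx (8 * k) ≤ s + m - d - 1 →
      ¬ ∀ j < m, wmatch (A (s + j)) (B j) := by
  classical
  intro s hs hsd hmatch
  set K := 8 * k with hK
  -- strict monotonicity of idx on [0, K]
  have hsm : ∀ t t', t < t' → t' ≤ K → idx t < idx t' := by
    intro t t' h h'
    induction t' with
    | zero => omega
    | succ u ih =>
      have hu : idx u < idx (u + 1) := hmono u (by omega)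
      rcases Nat.lt_succ_iff_lt_or_eq.mp h with h2 | h2
      · exact lt_trans (ih h2 (by omega)) hu
      · subst h2; exact hu
  have hle : ∀ t, t ≤ K → idx t ≤ idx K := by
    intro t ht
    rcases eq_or_lt_of_le ht with h | h
    · rw [h]
    · exact le_of_lt (hsm t K h le_rfl)
  have hge0 : ∀ t, t ≤ K → idx 0 ≤ idx t := by
    intro t ht
    rcases Nat.eq_zero_or_pos t with h | h
    · rw [h]
    · exact le_of_lt (hsm 0 t h ht)
  have hsidx : ∀ t, t ≤ K → s ≤ idx t := by
    intro t ht
    have h1 := hge0 t ht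
    omega
  have hub : ∀ t, t ≤ K → idx t - s < m - d := by
    intro t ht
    have h1 : idx t ≤ s + m - d - 1 := le_trans (hle t ht) hsd
    omega
  have hAn : ∀ t, t ≤ K → idx t + d < n := by
    intro t ht
    have h1 : idx t ≤ n - d - 1 := le_trans (hle t ht) hlast
    omega
  -- key case analysis for each index
  have key : ∀ t, t ≤ K → A (idx t) = none ∨ A (idx t + d) = none ∨
      B (idx t - s) = none ∨ B (idx t - s + d) = none ∨ S B d (idx t - s) = 1 := by
    intro t ht
    have hS := hones t ht
    have hcond : A (idx t) = none ∨ A (idx t + d) = none ∨ A (idx t) ≠ A (idx t + d) := by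
      by_contra h
      unfold S at hS
      rw [if_neg h] at hS
      omega
    have hub' := hub t ht
    have hsx := hsidx t ht
    have hj1 : idx t - s < m := by omega
    have hj2 : idx t - s + d < m := by omega
    have hw1 : A (s + (idx t - s)) = none ∨ B (idx t - s) = none ∨
        A (s + (idx t - s)) = B (idx t - s) := hmatch (idx t - s) hj1
    have hw2 : A (s + (idx t - s + d)) = none ∨ B (idx t - s + d) = none ∨
        A (s + (idx t - s + d)) = B (idx t - s + d) := hmatch (idx t - s + d) hj2
    have e1 : s + (idx t - s) = idx t := by omega
    have e2 : s + (idx t - s + d) = idx t + d := by omega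
    rw [e1] at hw1
    rw [e2] at hw2
    rcases hcond with h | h | h
    · exact Or.inl h
    · exact Or.inr (Or.inl h)
    by_cases hA1 : A (idx t) = none
    · exact Or.inl hA1
    by_cases hA2 : A (idx t + d) = none
    · exact Or.inr (Or.inl hA2)
    by_cases hB1 : B (idx t - s) = none
    · exact Or.inr (Or.inr (Or.inl hB1))
    by_cases hB2 : B (idx t - s + d) = none
    · exact Or.inr (Or.inr (Or.inr (Or.inl hB2)))
    refine Or.inr (Or.inr (Or.inr (Or.inr ?_)))
    have e3 : A (idx t) = B (idx t - s) := by tauto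
    have e4 : A (idx t + d) = B (idx t - s + d) := by tauto
    have hne : B (idx t - s) ≠ B (idx t - s + d) := by rw [← e3, ← e4]; exact h
    unfold S
    rw [if_pos (Or.inr (Or.inr hne))]
  -- counting
  set T := Finset.range (K + 1) with hT
  have hmemT : ∀ t ∈ T, t ≤ K := by
    intro t ht
    rw [hT, Finset.mem_range] at ht
    omega
  have hinj : ∀ t ∈ T, ∀ t' ∈ T, idx t = idx t' → t = t' := by
    intro t ht t' ht' h
    have ht1 := hmemT t ht
    have ht2 := hmemT t' ht'
    by_contra hne
    rcases Nat.lt_or_ge t t' with hlt | hge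
    · exact absurd h (Nat.ne_of_lt (hsm t t' hlt ht2))
    · have hlt : t' < t := by omega
      exact absurd h.symm (Nat.ne_of_lt (hsm t' t hlt ht1))
  set T1 := T.filter (fun t => A (idx t) = none) with hT1def
  set T2 := T.filter (fun t => A (idx t + d) = none) with hT2def
  set T3 := T.filter (fun t => B (idx t - s) = none) with hT3def
  set T4 := T.filter (fun t => B (idx t - s + d) = none) with hT4def
  set T5 := T.filter (fun t => S B d (idx t - s) = 1) with hT5def
  have hcover : T ⊆ T1 ∪ T2 ∪ T3 ∪ T4 ∪ T5 := by
    intro t ht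
    have ht' := hmemT t ht
    rcases key t ht' with h | h | h | h | h <;>
      simp only [hT1def, hT2def, hT3def, hT4def, hT5def, Finset.mem_union,
        Finset.mem_filter] <;> tauto
  have hcT1 : T1.card ≤ wcount A n := by
    unfold wcount
    apply Finset.card_le_card_of_injOn idx
    · intro t ht
      rw [hT1def, Finset.mem_coe, Finset.mem_filter] at ht
      rw [Finset.mem_coe, Finset.mem_filter, Finset.mem_range]
      have := hAn t (hmemT t ht.1)
      exact ⟨by omega, ht.2⟩
    · intro t ht t' ht' h
      rw [Finset.mem_coe, hT1def, Finset.mem_filter] at ht ht'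
      exact hinj t ht.1 t' ht'.1 h
  have hcT2 : T2.card ≤ wcount A n := by
    unfold wcount
    apply Finset.card_le_card_of_injOn (fun t => idx t + d)
    · intro t ht
      rw [hT2def, Finset.mem_coe, Finset.mem_filter] at ht
      rw [Finset.mem_coe, Finset.mem_filter, Finset.mem_range]
      have := hAn t (hmemT t ht.1)
      exact ⟨by omega, ht.2⟩
    · intro t ht t' ht' h
      rw [Finset.mem_coe, hT2def, Finset.mem_filter] at ht ht'
      exact hinj t ht.1 t' ht'.1 (by simp only at h; omega)
  have hcT3 : T3.card ≤ wcount B m := by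
    unfold wcount
    apply Finset.card_le_card_of_injOn (fun t => idx t - s)
    · intro t ht
      rw [hT3def, Finset.mem_coe, Finset.mem_filter] at ht
      rw [Finset.mem_coe, Finset.mem_filter, Finset.mem_range]
      have := hub t (hmemT t ht.1)
      exact ⟨by simp only; omega, ht.2⟩
    · intro t ht t' ht' h
      rw [Finset.mem_coe, hT3def, Finset.mem_filter] at ht ht'
      have h1 := hsidx t (hmemT t ht.1)
      have h2 := hsidx t' (hmemT t' ht'.1)
      exact hinj t ht.1 t' ht'.1 (by simp only at h; omega)
  have hcT4 : T4.card ≤ wcount B m := by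
    unfold wcount
    apply Finset.card_le_card_of_injOn (fun t => idx t - s + d)
    · intro t ht
      rw [hT4def, Finset.mem_coe, Finset.mem_filter] at ht
      rw [Finset.mem_coe, Finset.mem_filter, Finset.mem_range]
      have := hub t (hmemT t ht.1)
      exact ⟨by simp only; omega, ht.2⟩
    · intro t ht t' ht' h
      rw [Finset.mem_coe, hT4def, Finset.mem_filter] at ht ht'
      have h1 := hsidx t (hmemT t ht.1)
      have h2 := hsidx t' (hmemT t' ht'.1)
      exact hinj t ht.1 t' ht'.1 (by simp only at h; omega)
  have hcT5 : T5.card ≤ 6 * k := by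
    have hstep : T5.card ≤ ((Finset.range (m - d)).filter (fun j => S B d j = 1)).card := by
      apply Finset.card_le_card_of_injOn (fun t => idx t - s)
      · intro t ht
        rw [hT5def, Finset.mem_coe, Finset.mem_filter] at ht
        rw [Finset.mem_coe, Finset.mem_filter, Finset.mem_range]
        exact ⟨hub t (hmemT t ht.1), ht.2⟩
      · intro t ht t' ht' h
        rw [Finset.mem_coe, hT5def, Finset.mem_filter] at ht ht'
        have h1 := hsidx t (hmemT t ht.1)
        have h2 := hsidx t' (hmemT t' ht'.1)
        exact hinj t ht.1 t' ht'.1 (by simp only at h; omega)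
    have hfilt : ((Finset.range (m - d)).filter (fun j => S B d j = 1)).card ≤ Ssum B m d := by
      unfold Ssum
      rw [Finset.card_filter]
      refine Finset.sum_le_sum ?_
      intro i _
      split_ifs with h <;> omega
    omega
  have hcard : K + 1 ≤ T1.card + T2.card + T3.card + T4.card + T5.card := by
    have h1 : T.card = K + 1 := by rw [hT, Finset.card_range]
    have h2 : T.card ≤ (T1 ∪ T2 ∪ T3 ∪ T4 ∪ T5).card := Finset.card_le_card hcover
    have h3 : (T1 ∪ T2 ∪ T3 ∪ T4 ∪ T5).card ≤ T1.card + T2.card + T3.card + T4.card + T5.card := by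
      calc (T1 ∪ T2 ∪ T3 ∪ T4 ∪ T5).card
          ≤ (T1 ∪ T2 ∪ T3 ∪ T4).card + T5.card := Finset.card_union_le _ _
        _ ≤ (T1 ∪ T2 ∪ T3).card + T4.card + T5.card := by
            have := Finset.card_union_le (T1 ∪ T2 ∪ T3) T4; omega
        _ ≤ (T1 ∪ T2).card + T3.card + T4.card + T5.card := by
            have := Finset.card_union_le (T1 ∪ T2) T3; omega
        _ ≤ T1.card + T2.card + T3.card + T4.card + T5.card := by
            have := Finset.card_union_le T1 T2; omega
    omega
  omega
end
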